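/- Suppose ζ = q_0 q_1 ⋯ q_{m−1} is a primitive d-th root of unity. Set N = dm if m is even, or char K = 2, or (m is odd, char K ≠ 2 and d is even); and N = 2dm if m is odd, char K ≠ 2 and d is odd. Then E(Λ_q) is generated as a module over its subalgebra Z_gr(E(Λ_q)) by the finite set of monomials {γ_i^s δ_j^t : 0 ≤ i, j ≤ m−1, 0 ≤ s, t ≤ N} (where a product γ_i^s δ_j^t with mismatched endpoints is zero). -/

import Mathlib

open scoped BigOperators

noncomputable section

/-- Generators of the path algebra: trivial paths `e i`, arrows `a i : i → i+1`
and `abar i : i+1 → i`. -/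
inductive Gen (m : ℕ) : Type
  | e : ZMod m → Gen m
  | a : ZMod m → Gen m
  | abar : ZMod m → Gen m

/-- The free associative algebra on the generators. -/
abbrev FA (K : Type) [Field K] (m : ℕ) : Type := FreeAlgebra K (Gen m)

def Ee (K : Type) [Field K] (m : ℕ) (i : ZMod m) : FA K m := FreeAlgebra.ι K (Gen.e i)
def Aa (K : Type) [Field K] (m : ℕ) (i : ZMod m) : FA K m := FreeAlgebra.ι K (Gen.a i)
def Bb (K : Type) [Field K] (m : ℕ) (i : ZMod m) : FA K m := FreeAlgebra.ι K (Gen.abar i)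

/-- The defining relations of the path algebra KQ. -/
inductive PathRel (K : Type) [Field K] (m : ℕ) [NeZero m] : FA K m → FA K m → Prop
  | orth : ∀ i j : ZMod m, i ≠ j → PathRel K m (Ee K m i * Ee K m j) 0
  | idem : ∀ i : ZMod m, PathRel K m (Ee K m i * Ee K m i) (Ee K m i)
  | total : PathRel K m (∑ i : ZMod m, Ee K m i) 1
  | asrc : ∀ i : ZMod m, PathRel K m (Ee K m i * Aa K m i) (Aa K m i)
  | atgt : ∀ i : ZMod m, PathRel K m (Aa K m i * Ee K m (i + 1)) (Aa K m i)
  | bsrc : ∀ i : ZMod m, PathRel K m (Ee K m (i + 1) * Bb K m i) (Bb K m i)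
  | btgt : ∀ i : ZMod m, PathRel K m (Bb K m i * Ee K m i) (Bb K m i)

/-- The path algebra KQ. -/
abbrev PathAlg (K : Type) [Field K] (m : ℕ) [NeZero m] : Type := RingQuot (PathRel K m)

def pe (K : Type) [Field K] (m : ℕ) [NeZero m] (i : ZMod m) : PathAlg K m :=
  RingQuot.mkAlgHom K (PathRel K m) (Ee K m i)
def pa (K : Type) [Field K] (m : ℕ) [NeZero m] (i : ZMod m) : PathAlg K m :=
  RingQuot.mkAlgHom K (PathRel K m) (Aa K m i)
def pb (K : Type) [Field K] (m : ℕ) [NeZero m] (i : ZMod m) : PathAlg K m :=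
  RingQuot.mkAlgHom K (PathRel K m) (Bb K m i)

/-- The relations defining the Koszul dual (Ext algebra) of `Λ_q`:
`q_i⁻¹ a_i ā_i + ā_{i-1} a_{i-1} = 0`. -/
inductive ExtRel (K : Type) [Field K] (m : ℕ) [NeZero m] (q : ZMod m → K) :
    PathAlg K m → PathAlg K m → Prop
  | rel : ∀ i : ZMod m,
      ExtRel K m q ((q i)⁻¹ • (pa K m i * pb K m i) + pb K m (i - 1) * pa K m (i - 1)) 0

/-- The Ext algebra `E(Λ_q)`. -/
abbrev ExtAlg (K : Type) [Field K] (m : ℕ) [NeZero m] (q : ZMod m → K) : Type :=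
  RingQuot (ExtRel K m q)

def xe (K : Type) [Field K] (m : ℕ) [NeZero m] (q : ZMod m → K) (i : ZMod m) :
    ExtAlg K m q := RingQuot.mkAlgHom K (ExtRel K m q) (pe K m i)
def xa (K : Type) [Field K] (m : ℕ) [NeZero m] (q : ZMod m → K) (i : ZMod m) :
    ExtAlg K m q := RingQuot.mkAlgHom K (ExtRel K m q) (pa K m i)
def xb (K : Type) [Field K] (m : ℕ) [NeZero m] (q : ZMod m → K) (i : ZMod m) :
    ExtAlg K m q := RingQuot.mkAlgHom K (ExtRel K m q) (pb K m i)

/-- `γ_i^n`, the image of the path `a_i a_{i+1} ⋯ a_{i+n-1}` in `E(Λ_q)`. -/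
def gam (K : Type) [Field K] (m : ℕ) [NeZero m] (q : ZMod m → K) (i : ZMod m) :
    ℕ → ExtAlg K m q
  | 0 => xe K m q i
  | n + 1 => xa K m q i * gam K m q (i + 1) n

/-- `δ_i^n`, the image of the path `ā_{i+n-1} ⋯ ā_{i+1} ā_i` in `E(Λ_q)`. -/
def del (K : Type) [Field K] (m : ℕ) [NeZero m] (q : ZMod m → K) (i : ZMod m) :
    ℕ → ExtAlg K m q
  | 0 => xe K m q i
  | n + 1 => xb K m q (i + (n : ZMod m)) * del K m q i n

/-- Homogeneity of path-length degree `n` in `E(Λ_q)`: membership in the span of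
the (images of) paths of length `n`, i.e. of the monomials `γ_i^s δ_j^t` with `s + t = n`. -/
def Homog (K : Type) [Field K] (m : ℕ) [NeZero m] (q : ZMod m → K) (n : ℕ)
    (z : ExtAlg K m q) : Prop :=
  z ∈ Submodule.span K
    {x : ExtAlg K m q | ∃ (i j : ZMod m) (s t : ℕ), s + t = n ∧ x = gam K m q i s * del K m q j t}

/-- The graded centre of `E(Λ_q)`: the subalgebra generated by all homogeneous elements `z`
of degree `n` such that `z g = (-1)^{n n'} g z` for all homogeneous `g` of degree `n'`. -/
def ZGr (K : Type) [Field K] (m : ℕ) [NeZero m] (q : ZMod m → K) :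
    Subalgebra K (ExtAlg K m q) :=
  Algebra.adjoin K
    {z : ExtAlg K m q | ∃ n : ℕ, Homog K m q n z ∧
      ∀ (n' : ℕ) (g : ExtAlg K m q), Homog K m q n' g →
        z * g = ((-1 : K) ^ (n * n')) • (g * z)}

/-- The product `q_k q_{k+1} ⋯ q_{k+len-1}` (subscripts modulo `m`). -/
def qblock (K : Type) [Field K] (m : ℕ) [NeZero m] (q : ZMod m → K) (k len : ℕ) : K :=
  ∏ j ∈ Finset.range len, q ((k + j : ℕ) : ZMod m)

/-- The coefficient `∏_{k=1}^{i} (q_k ⋯ q_{k+len-1})⁻¹`. -/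
def wcoef (K : Type) [Field K] (m : ℕ) [NeZero m] (q : ZMod m → K) (i len : ℕ) : K :=
  ∏ k ∈ Finset.Icc 1 i, (qblock K m q k len)⁻¹

/-!
The relation `ā_i a_i = -q_{i+1}⁻¹ a_{i+1} ā_{i+1}` moves an arrow `ā` past a path of `a`'s (and an
`a` past a path of `ā`'s) at the cost of one factor `-q⁻¹` per arrow, so the monomials
`γ_a^s δ_b^t` span `E(Λ_q)` over `K`. For `N = c m` the sums `∑ i, γ_i^N` and `∑ i, δ_i^N` then
commute with every generator as soon as `∏_{k<N} (-q_{j+1+k}⁻¹) = ((-1)^m ζ⁻¹)^c` equals `1`, and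
they lie in the graded centre when moreover `(-1)^N = 1`; the `N` of the statement is a multiple of
`d m` chosen even unless `char K = 2`, so both hold. Dividing `s` and `t` by `N` writes `γ_a^s δ_b^t` as a product of powers of these
two central elements and a monomial with exponents `< N`.
-/

open Finset

section ZModProducts

variable {m : ℕ} [NeZero m] {M : Type*} [CommMonoid M]

lemma prod_range_eq_prod_zmod (f : ZMod m → M) (j : ZMod m) :
    ∏ k ∈ range m, f (j + k) = ∏ i, f i := by
  rw [← Fintype.prod_equiv (Equiv.addLeft j) (fun i ↦ f (j + i)) f fun _ ↦ rfl]
  refine prod_nbij' (fun k ↦ (k : ZMod m)) ZMod.val (by simp)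
    (fun i _ ↦ by simpa using ZMod.val_lt i) (fun k hk ↦ ZMod.val_cast_of_lt (mem_range.1 hk))
    (fun i _ ↦ ZMod.natCast_zmod_val i) (fun _ _ ↦ rfl)

lemma prod_range_mul_eq_pow (f : ZMod m → M) (j : ZMod m) (c : ℕ) :
    ∏ k ∈ range (c * m), f (j + k) = (∏ i, f i) ^ c := by
  induction c with
  | zero => simp
  | succ c ih => simp [add_mul, prod_range_add, ih, prod_range_eq_prod_zmod, pow_succ]

end ZModProducts

section Relations

variable {K : Type} [Field K] {m : ℕ} [NeZero m] {q : ZMod m → K}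

variable (K m q) in
def extProj : FA K m →ₐ[K] ExtAlg K m q :=
  (RingQuot.mkAlgHom K (ExtRel K m q)).comp (RingQuot.mkAlgHom K (PathRel K m))

@[simp] lemma extProj_Ee (i : ZMod m) : extProj K m q (Ee K m i) = xe K m q i := rfl
@[simp] lemma extProj_Aa (i : ZMod m) : extProj K m q (Aa K m i) = xa K m q i := rfl
@[simp] lemma extProj_Bb (i : ZMod m) : extProj K m q (Bb K m i) = xb K m q i := rfl

lemma extProj_surjective : Function.Surjective (extProj K m q) :=
  (RingQuot.mkAlgHom_surjective K _).comp (RingQuot.mkAlgHom_surjective K _)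

lemma extProj_eq_of_pathRel {x y : FA K m} (h : PathRel K m x y) :
    extProj K m q x = extProj K m q y :=
  congrArg (RingQuot.mkAlgHom K (ExtRel K m q)) (RingQuot.mkAlgHom_rel K h)

lemma extAlg_induction {P : ExtAlg K m q → Prop}
    (h_algebraMap : ∀ r : K, P (algebraMap K _ r)) (h_xe : ∀ i, P (xe K m q i))
    (h_xa : ∀ i, P (xa K m q i)) (h_xb : ∀ i, P (xb K m q i))
    (h_add : ∀ x y, P x → P y → P (x + y)) (h_mul : ∀ x y, P x → P y → P (x * y))
    (x : ExtAlg K m q) : P x := by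
  obtain ⟨y, rfl⟩ := extProj_surjective x
  induction y using FreeAlgebra.induction with
  | grade0 r => simpa only [AlgHom.commutes] using h_algebraMap r
  | grade1 g =>
    cases g with
    | e i => exact h_xe i
    | a i => exact h_xa i
    | abar i => exact h_xb i
  | mul y₁ y₂ ih₁ ih₂ => simpa only [map_mul] using h_mul _ _ ih₁ ih₂
  | add y₁ y₂ ih₁ ih₂ => simpa only [map_add] using h_add _ _ ih₁ ih₂

lemma xe_mul_xe_of_ne {i j : ZMod m} (h : i ≠ j) : xe K m q i * xe K m q j = 0 := by
  simpa using extProj_eq_of_pathRel (q := q) (PathRel.orth i j h)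

lemma xe_mul_xe (i : ZMod m) : xe K m q i * xe K m q i = xe K m q i := by
  simpa using extProj_eq_of_pathRel (q := q) (PathRel.idem i)

variable (K m q) in
lemma sum_xe : ∑ i, xe K m q i = 1 := by
  simpa using extProj_eq_of_pathRel (q := q) (PathRel.total (K := K) (m := m))

lemma xe_mul_xa (i : ZMod m) : xe K m q i * xa K m q i = xa K m q i := by
  simpa using extProj_eq_of_pathRel (q := q) (PathRel.asrc i)

lemma xa_mul_xe (i : ZMod m) : xa K m q i * xe K m q (i + 1) = xa K m q i := by
  simpa using extProj_eq_of_pathRel (q := q) (PathRel.atgt i)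

lemma xe_mul_xb (i : ZMod m) : xe K m q (i + 1) * xb K m q i = xb K m q i := by
  simpa using extProj_eq_of_pathRel (q := q) (PathRel.bsrc i)

lemma xb_mul_xe (i : ZMod m) : xb K m q i * xe K m q i = xb K m q i := by
  simpa using extProj_eq_of_pathRel (q := q) (PathRel.btgt i)

lemma xb_mul_xa (i : ZMod m) :
    xb K m q i * xa K m q i = (-(q (i + 1))⁻¹) • (xa K m q (i + 1) * xb K m q (i + 1)) := by
  have h : (q (i + 1))⁻¹ • (xa K m q (i + 1) * xb K m q (i + 1)) + xb K m q i * xa K m q i = 0 := by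
    have := RingQuot.mkAlgHom_rel K (ExtRel.rel (q := q) (i + 1))
    simp only [map_add, map_smul, map_mul, map_zero, add_sub_cancel_right] at this
    exact this
  rw [neg_smul (M := ExtAlg K m q)]
  exact (neg_eq_of_add_eq_zero_right h).symm

end Relations

section Paths

variable {K : Type} [Field K] {m : ℕ} [NeZero m] {q : ZMod m → K}

lemma xe_mul_gam (i : ZMod m) (n : ℕ) : xe K m q i * gam K m q i n = gam K m q i n := by
  cases n with
  | zero => exact xe_mul_xe i
  | succ n => rw [gam, ← mul_assoc, xe_mul_xa]

lemma xe_mul_gam_of_ne {i j : ZMod m} (h : j ≠ i) (n : ℕ) :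
    xe K m q j * gam K m q i n = 0 := by
  rw [← xe_mul_gam i n, ← mul_assoc, xe_mul_xe_of_ne h, zero_mul]

lemma gam_mul_xe (i : ZMod m) (n : ℕ) : gam K m q i n * xe K m q (i + n) = gam K m q i n := by
  induction n generalizing i with
  | zero => rw [Nat.cast_zero, add_zero]; exact xe_mul_xe i
  | succ n ih => rw [gam, mul_assoc, Nat.cast_succ, add_comm (n : ZMod m), ← add_assoc, ih]

lemma gam_mul_xe_of_ne {i j : ZMod m} {n : ℕ} (h : i + n ≠ j) :
    gam K m q i n * xe K m q j = 0 := by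
  rw [← gam_mul_xe i n, mul_assoc, xe_mul_xe_of_ne h, mul_zero]

lemma del_mul_xe (i : ZMod m) (n : ℕ) : del K m q i n * xe K m q i = del K m q i n := by
  induction n with
  | zero => exact xe_mul_xe i
  | succ n ih => rw [del, mul_assoc, ih]

lemma del_mul_xe_of_ne {i j : ZMod m} (h : i ≠ j) (n : ℕ) :
    del K m q i n * xe K m q j = 0 := by
  rw [← del_mul_xe i n, mul_assoc, xe_mul_xe_of_ne h, mul_zero]

lemma xe_mul_del (i : ZMod m) (n : ℕ) : xe K m q (i + n) * del K m q i n = del K m q i n := by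
  cases n with
  | zero => rw [Nat.cast_zero, add_zero]; exact xe_mul_xe i
  | succ n => rw [del, ← mul_assoc, Nat.cast_succ, ← add_assoc, xe_mul_xb]

lemma xe_mul_del_of_ne {i j : ZMod m} {n : ℕ} (h : j ≠ i + n) :
    xe K m q j * del K m q i n = 0 := by
  rw [← xe_mul_del i n, ← mul_assoc, xe_mul_xe_of_ne h, zero_mul]

lemma xb_mul_gam_of_ne {i j : ZMod m} (h : j ≠ i) (n : ℕ) :
    xb K m q j * gam K m q i n = 0 := by
  rw [← xb_mul_xe j, mul_assoc, xe_mul_gam_of_ne h, mul_zero]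

lemma xb_mul_del_of_ne {i j : ZMod m} {n : ℕ} (h : j ≠ i + n) :
    xb K m q j * del K m q i n = 0 := by
  rw [← xb_mul_xe j, mul_assoc, xe_mul_del_of_ne h, mul_zero]

lemma gam_add (i : ZMod m) (n₁ n₂ : ℕ) :
    gam K m q i (n₁ + n₂) = gam K m q i n₁ * gam K m q (i + n₁) n₂ := by
  induction n₁ generalizing i with
  | zero => simp [gam, xe_mul_gam]
  | succ n₁ ih =>
    rw [Nat.succ_add, gam, gam, ih, mul_assoc, Nat.cast_succ, add_comm (n₁ : ZMod m), add_assoc]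

lemma del_add (i : ZMod m) (n₁ n₂ : ℕ) :
    del K m q i (n₁ + n₂) = del K m q (i + n₂) n₁ * del K m q i n₂ := by
  induction n₁ with
  | zero => rw [zero_add]; exact (xe_mul_del i n₂).symm
  | succ n₁ ih =>
    rw [Nat.succ_add, del, del, ih, ← mul_assoc, Nat.cast_add, add_comm (n₁ : ZMod m), add_assoc]

lemma xb_mul_gam (j : ZMod m) (n : ℕ) :
    xb K m q j * gam K m q j n =
      (∏ k ∈ range n, -(q (j + 1 + k))⁻¹) • (gam K m q (j + 1) n * xb K m q (j + n)) := by
  induction n generalizing j with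
  | zero => simp [gam, xb_mul_xe, xe_mul_xb]
  | succ n ih =>
    rw [gam, ← mul_assoc, xb_mul_xa, smul_mul_assoc, mul_assoc, ih, mul_smul_comm, smul_smul,
      ← mul_assoc, ← gam, prod_range_succ', mul_comm]
    congr 3
    · ext k
      push_cast
      ring_nf
    · simp
    · push_cast
      ring

lemma del_mul_xa (j : ZMod m) (n : ℕ) :
    del K m q j n * xa K m q j =
      (∏ k ∈ range n, -(q (j + 1 + k))⁻¹) • (xa K m q (j + n) * del K m q (j + 1) n) := by
  induction n with
  | zero => simp [del, xe_mul_xa, xa_mul_xe]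
  | succ n ih =>
    rw [del, mul_assoc, ih, mul_smul_comm, ← mul_assoc, xb_mul_xa, smul_mul_assoc, smul_smul,
      mul_assoc, prod_range_succ, Nat.cast_succ, ← add_assoc, add_right_comm j (n : ZMod m) 1]
    rfl

end Paths

section Central

variable {K : Type} [Field K] {m : ℕ} [NeZero m] {q : ZMod m → K}

variable (K m q) in
def gamSum (N : ℕ) : ExtAlg K m q := ∑ i, gam K m q i N

variable (K m q) in
def delSum (N : ℕ) : ExtAlg K m q := ∑ i, del K m q i N

variable {N : ℕ}

lemma gamSum_mul_xe (hN : (N : ZMod m) = 0) (j : ZMod m) :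
    gamSum K m q N * xe K m q j = gam K m q j N := by
  rw [gamSum, sum_mul, Fintype.sum_eq_single j fun i hij ↦
    gam_mul_xe_of_ne (by rwa [hN, add_zero])]
  simpa [hN] using gam_mul_xe (q := q) j N

lemma xe_mul_gamSum (j : ZMod m) : xe K m q j * gamSum K m q N = gam K m q j N := by
  rw [gamSum, mul_sum, Fintype.sum_eq_single j fun i hij ↦ xe_mul_gam_of_ne hij.symm N,
    xe_mul_gam]

lemma delSum_mul_xe (j : ZMod m) : delSum K m q N * xe K m q j = del K m q j N := by
  rw [delSum, sum_mul, Fintype.sum_eq_single j fun i hij ↦ del_mul_xe_of_ne hij N, del_mul_xe]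

lemma xe_mul_delSum (hN : (N : ZMod m) = 0) (j : ZMod m) :
    xe K m q j * delSum K m q N = del K m q j N := by
  rw [delSum, mul_sum, Fintype.sum_eq_single j fun i hij ↦
    xe_mul_del_of_ne (by rw [hN, add_zero]; exact hij.symm)]
  simpa [hN] using xe_mul_del (q := q) j N

lemma commute_of_forall_commute_gen {z : ExtAlg K m q} (he : ∀ j, Commute z (xe K m q j))
    (ha : ∀ j, Commute z (xa K m q j)) (hb : ∀ j, Commute z (xb K m q j)) (x : ExtAlg K m q) :
    Commute z x :=
  extAlg_induction (fun r ↦ Algebra.commute_algebraMap_right r z) he ha hb (fun _ _ ↦ .add_right)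
    (fun _ _ ↦ .mul_right) x

lemma commute_gamSum (hN : (N : ZMod m) = 0)
    (hP : ∀ j : ZMod m, ∏ k ∈ range N, -(q (j + 1 + k))⁻¹ = 1) (x : ExtAlg K m q) :
    Commute (gamSum K m q N) x := by
  refine commute_of_forall_commute_gen (fun j ↦ ?_) (fun j ↦ ?_) (fun j ↦ ?_) x
  · rw [Commute, SemiconjBy, gamSum_mul_xe hN, xe_mul_gamSum]
  · calc gamSum K m q N * xa K m q j
        = gamSum K m q N * xe K m q j * xa K m q j := by rw [mul_assoc, xe_mul_xa]
      _ = gam K m q j (N + 1) := by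
        rw [gamSum_mul_xe hN, gam_add, hN, add_zero, gam, gam, xa_mul_xe]
      _ = xa K m q j * gamSum K m q N := by
        rw [gam, ← xe_mul_gamSum (j + 1), ← mul_assoc, xa_mul_xe]
  · calc gamSum K m q N * xb K m q j
        = gamSum K m q N * xe K m q (j + 1) * xb K m q j := by rw [mul_assoc, xe_mul_xb]
      _ = xb K m q j * gam K m q j N := by
        rw [gamSum_mul_xe hN, xb_mul_gam, hP, one_smul, hN, add_zero]
      _ = xb K m q j * gamSum K m q N := by rw [← xe_mul_gamSum, ← mul_assoc, xb_mul_xe]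

lemma commute_delSum (hN : (N : ZMod m) = 0)
    (hP : ∀ j : ZMod m, ∏ k ∈ range N, -(q (j + 1 + k))⁻¹ = 1) (x : ExtAlg K m q) :
    Commute (delSum K m q N) x := by
  refine commute_of_forall_commute_gen (fun j ↦ ?_) (fun j ↦ ?_) (fun j ↦ ?_) x
  · rw [Commute, SemiconjBy, delSum_mul_xe, xe_mul_delSum hN]
  · calc delSum K m q N * xa K m q j
        = delSum K m q N * xe K m q j * xa K m q j := by rw [mul_assoc, xe_mul_xa]
      _ = xa K m q j * del K m q (j + 1) N := by
        rw [delSum_mul_xe, del_mul_xa, hP, one_smul, hN, add_zero]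
      _ = xa K m q j * delSum K m q N := by rw [← xe_mul_delSum hN, ← mul_assoc, xa_mul_xe]
  · calc delSum K m q N * xb K m q j
        = delSum K m q N * xe K m q (j + 1) * xb K m q j := by rw [mul_assoc, xe_mul_xb]
      _ = del K m q j (N + 1) := by
        rw [delSum_mul_xe, del_add, Nat.cast_one, del, del, Nat.cast_zero, add_zero, xb_mul_xe]
      _ = xb K m q j * delSum K m q N := by
        rw [← xb_mul_xe, mul_assoc, xe_mul_delSum hN, del, hN, add_zero]

end Central

section GradedCentre

variable {K : Type} [Field K] {m : ℕ} [NeZero m] {q : ZMod m → K}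

lemma homog_gam (i : ZMod m) (n : ℕ) : Homog K m q n (gam K m q i n) :=
  Submodule.subset_span ⟨i, i + n, n, 0, add_zero n, (gam_mul_xe i n).symm⟩

lemma homog_del (i : ZMod m) (n : ℕ) : Homog K m q n (del K m q i n) :=
  Submodule.subset_span ⟨i + n, i, 0, n, zero_add n, (xe_mul_del i n).symm⟩

lemma mem_ZGr_of_commute {z : ExtAlg K m q} {n : ℕ} (hz : Homog K m q n z)
    (hc : ∀ x, Commute z x) (hs : (-1 : K) ^ n = 1) : z ∈ ZGr K m q :=
  Algebra.subset_adjoin ⟨n, hz, fun n' g _ ↦ by rw [pow_mul, hs, one_pow, one_smul, hc]⟩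

variable {N : ℕ}

lemma gamSum_mem_ZGr (hN : (N : ZMod m) = 0)
    (hP : ∀ j : ZMod m, ∏ k ∈ range N, -(q (j + 1 + k))⁻¹ = 1) (hs : (-1 : K) ^ N = 1) :
    gamSum K m q N ∈ ZGr K m q :=
  mem_ZGr_of_commute (Submodule.sum_mem _ fun i _ ↦ homog_gam i N) (commute_gamSum hN hP) hs

lemma delSum_mem_ZGr (hN : (N : ZMod m) = 0)
    (hP : ∀ j : ZMod m, ∏ k ∈ range N, -(q (j + 1 + k))⁻¹ = 1) (hs : (-1 : K) ^ N = 1) :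
    delSum K m q N ∈ ZGr K m q :=
  mem_ZGr_of_commute (Submodule.sum_mem _ fun i _ ↦ homog_del i N) (commute_delSum hN hP) hs

end GradedCentre

section Periodicity

variable {K : Type} [Field K] {m : ℕ} [NeZero m] {q : ZMod m → K} {N : ℕ}

lemma gam_period_add (hN : (N : ZMod m) = 0) (a : ZMod m) (s : ℕ) :
    gam K m q a (N + s) = gamSum K m q N * gam K m q a s := by
  rw [gam_add, hN, add_zero, ← gamSum_mul_xe hN, mul_assoc, xe_mul_gam]

lemma del_period_add (b : ZMod m) (t : ℕ) :
    del K m q b (N + t) = delSum K m q N * del K m q b t := by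
  rw [del_add, ← delSum_mul_xe, mul_assoc, xe_mul_del]

lemma gam_period_mul_add (hN : (N : ZMod m) = 0) (a : ZMod m) (k r : ℕ) :
    gam K m q a (N * k + r) = gamSum K m q N ^ k * gam K m q a r := by
  induction k with
  | zero => simp
  | succ k ih => rw [mul_add_one, add_comm _ N, add_assoc, gam_period_add hN, ih, pow_succ',
      mul_assoc]

lemma del_period_mul_add (b : ZMod m) (k r : ℕ) :
    del K m q b (N * k + r) = delSum K m q N ^ k * del K m q b r := by
  induction k with
  | zero => simp
  | succ k ih => rw [mul_add_one, add_comm _ N, add_assoc, del_period_add, ih, pow_succ',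
      mul_assoc]

lemma gam_mul_del_period_mul_add (hN : (N : ZMod m) = 0)
    (hP : ∀ j : ZMod m, ∏ k ∈ range N, -(q (j + 1 + k))⁻¹ = 1) (a b : ZMod m) (k l r r' : ℕ) :
    gam K m q a (N * k + r) * del K m q b (N * l + r') =
      (gamSum K m q N ^ k * delSum K m q N ^ l) * (gam K m q a r * del K m q b r') := by
  rw [gam_period_mul_add hN, del_period_mul_add, mul_assoc, ← mul_assoc (gam K m q a r),
    ← (commute_delSum hN hP _).pow_left, mul_assoc, ← mul_assoc]

end Periodicity

section Spanning

variable (K : Type) [Field K] (m : ℕ) [NeZero m] (q : ZMod m → K)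

def monomials : Set (ExtAlg K m q) :=
  {x | ∃ (a b : ZMod m) (s t : ℕ), x = gam K m q a s * del K m q b t}

def boundedMonomials (N : ℕ) : Set (ExtAlg K m q) :=
  {x | ∃ (a b : ZMod m) (s t : ℕ), s ≤ N ∧ t ≤ N ∧ x = gam K m q a s * del K m q b t}

variable {K m q}

lemma mul_mem_span_monomials {x y : ExtAlg K m q}
    (hx : ∀ a b s t, x * (gam K m q a s * del K m q b t) ∈ Submodule.span K (monomials K m q))
    (hy : y ∈ Submodule.span K (monomials K m q)) :
    x * y ∈ Submodule.span K (monomials K m q) := by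
  induction hy using Submodule.span_induction with
  | mem y hy => obtain ⟨a, b, s, t, rfl⟩ := hy; exact hx a b s t
  | zero => simp
  | add y₁ y₂ _ _ h₁ h₂ => rw [mul_add]; exact add_mem h₁ h₂
  | smul c y _ h => rw [mul_smul_comm]; exact Submodule.smul_mem _ c h

lemma xe_mul_monomial_mem (j a b : ZMod m) (s t : ℕ) :
    xe K m q j * (gam K m q a s * del K m q b t) ∈ Submodule.span K (monomials K m q) := by
  rw [← mul_assoc]
  by_cases h : j = a
  · subst h
    rw [xe_mul_gam]
    exact Submodule.subset_span ⟨j, b, s, t, rfl⟩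
  · rw [xe_mul_gam_of_ne h, zero_mul]
    exact zero_mem _

lemma xa_mul_monomial_mem (j a b : ZMod m) (s t : ℕ) :
    xa K m q j * (gam K m q a s * del K m q b t) ∈ Submodule.span K (monomials K m q) := by
  rw [← mul_assoc]
  by_cases h : j + 1 = a
  · subst h
    exact Submodule.subset_span ⟨j, b, s + 1, t, rfl⟩
  · rw [← xa_mul_xe, mul_assoc (xa K m q j), xe_mul_gam_of_ne h, mul_zero, zero_mul]
    exact zero_mem _

lemma xb_mul_monomial_mem (j a b : ZMod m) (s t : ℕ) :
    xb K m q j * (gam K m q a s * del K m q b t) ∈ Submodule.span K (monomials K m q) := by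
  rw [← mul_assoc]
  by_cases ha : j = a
  · subst ha
    rw [xb_mul_gam, smul_mul_assoc, mul_assoc]
    refine Submodule.smul_mem _ _ ?_
    by_cases hb : j + s = b + t
    · rw [hb]
      exact Submodule.subset_span ⟨j + 1, b, s, t + 1, rfl⟩
    · rw [xb_mul_del_of_ne hb, mul_zero]
      exact zero_mem _
  · rw [xb_mul_gam_of_ne ha, zero_mul]
    exact zero_mem _

variable (K m q) in
lemma span_monomials_eq_top : Submodule.span K (monomials K m q) = ⊤ := by
  have hmul : ∀ x : ExtAlg K m q, ∀ y ∈ Submodule.span K (monomials K m q),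
      x * y ∈ Submodule.span K (monomials K m q) := by
    refine extAlg_induction (fun r y hy ↦ ?_) (fun j _ ↦ mul_mem_span_monomials
        (xe_mul_monomial_mem j)) (fun j _ ↦ mul_mem_span_monomials (xa_mul_monomial_mem j))
      (fun j _ ↦ mul_mem_span_monomials (xb_mul_monomial_mem j))
      (fun x₁ x₂ h₁ h₂ y hy ↦ ?_) (fun x₁ x₂ h₁ h₂ y hy ↦ ?_)
    · rw [← Algebra.smul_def]
      exact Submodule.smul_mem _ r hy
    · rw [add_mul]
      exact add_mem (h₁ y hy) (h₂ y hy)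
    · rw [mul_assoc]
      exact h₁ _ (h₂ y hy)
  have hone : (1 : ExtAlg K m q) ∈ Submodule.span K (monomials K m q) := by
    rw [← sum_xe K m q]
    exact sum_mem fun i _ ↦ Submodule.subset_span ⟨i, i, 0, 0, (xe_mul_xe i).symm⟩
  exact Submodule.eq_top_iff'.2 fun x ↦ by simpa using hmul x 1 hone

end Spanning

section Generation

variable {K : Type} [Field K] {m : ℕ} [NeZero m] {q : ZMod m → K}

lemma prod_range_mul_neg_inv_eq_one {c : ℕ} (hζ : (∏ i, q i) ^ c = 1) (hs : (-1 : K) ^ (c * m) = 1)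
    (j : ZMod m) : ∏ k ∈ range (c * m), -(q (j + 1 + k))⁻¹ = 1 := by
  rw [prod_range_mul_eq_pow (fun i ↦ -(q i)⁻¹), prod_neg, prod_inv_distrib, card_univ, ZMod.card,
    mul_pow, ← pow_mul, mul_comm m, hs, inv_pow, hζ, inv_one, one_mul]

lemma mem_span_boundedMonomials {c : ℕ} (hc : 0 < c) (hζ : (∏ i, q i) ^ c = 1)
    (hs : (-1 : K) ^ (c * m) = 1) (x : ExtAlg K m q) :
    x ∈ Submodule.span (ZGr K m q) (boundedMonomials K m q (c * m)) := by
  set N := c * m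
  have hN : (N : ZMod m) = 0 := by simp [N]
  have hN0 : 0 < N := Nat.mul_pos hc (NeZero.pos m)
  have hP := prod_range_mul_neg_inv_eq_one hζ hs
  have hmon : monomials K m q ⊆ Submodule.span (ZGr K m q) (boundedMonomials K m q N) := by
    rintro _ ⟨a, b, s, t, rfl⟩
    rw [← Nat.div_add_mod s N, ← Nat.div_add_mod t N, gam_mul_del_period_mul_add hN hP]
    exact Submodule.smul_mem _ (⟨_, mul_mem (pow_mem (gamSum_mem_ZGr hN hP hs) _)
      (pow_mem (delSum_mem_ZGr hN hP hs) _)⟩ : ZGr K m q)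
      (Submodule.subset_span ⟨a, b, _, _, (Nat.mod_lt _ hN0).le, (Nat.mod_lt _ hN0).le, rfl⟩)
  have hx : x ∈ Submodule.span K (monomials K m q) := by simp [span_monomials_eq_top]
  exact (Submodule.span_le (p := (Submodule.span (ZGr K m q) _).restrictScalars K)).2 hmon hx

end Generation

lemma neg_one_pow_mul_eq_one {K : Type} [Ring K] {d m : ℕ}
    (h : ¬(m % 2 = 1 ∧ ringChar K ≠ 2 ∧ d % 2 = 1)) : (-1 : K) ^ (d * m) = 1 := by
  rcases Nat.even_or_odd (d * m) with he | ho
  · exact he.neg_one_pow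
  · have : ringChar K = 2 := by
      rw [Nat.odd_mul, Nat.odd_iff, Nat.odd_iff] at ho
      omega
    have := ringChar.of_eq this
    rw [CharTwo.neg_eq, one_pow]

theorem ext_algebra_generated_by_bounded_monomials_general
    (K : Type) [Field K] (m : ℕ) [NeZero m]
    (q : ZMod m → K)
    (d : ℕ) (hd : 0 < d) (hζ : IsPrimitiveRoot (∏ i : ZMod m, q i) d) :
    let N : ℕ := if m % 2 = 1 ∧ ringChar K ≠ 2 ∧ d % 2 = 1 then 2 * d * m else d * m
    ∀ x : ExtAlg K m q, ∃ (n : ℕ) (cf g : Fin n → ExtAlg K m q),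
      (∀ i, cf i ∈ ZGr K m q) ∧
      (∀ i, ∃ (a b : ZMod m) (s t : ℕ), s ≤ N ∧ t ≤ N ∧
        g i = gam K m q a s * del K m q b t) ∧
      x = ∑ i, cf i * g i := by
  intro N x
  set c := if m % 2 = 1 ∧ ringChar K ≠ 2 ∧ d % 2 = 1 then 2 * d else d
  have hN : N = c * m := (ite_mul ..).symm
  have hc : 0 < c := by simp only [c]; split_ifs <;> omega
  have hζc : (∏ i, q i) ^ c = 1 :=
    (hζ.pow_eq_one_iff_dvd c).2 (by simp only [c]; split_ifs <;> simp)
  have hs : (-1 : K) ^ (c * m) = 1 := by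
    simp only [c]
    split_ifs with h
    · exact Even.neg_one_pow ⟨d * m, by ring⟩
    · exact neg_one_pow_mul_eq_one h
  obtain ⟨n, f, g, hsum⟩ := Submodule.mem_span_set'.1 (hN ▸ mem_span_boundedMonomials hc hζc hs x)
  exact ⟨n, (f ·), (g ·), fun i ↦ (f i).2, fun i ↦ (g i).2, hsum.symm⟩

/-- if `ζ` is a primitive `d`-th root of unity, then `E(Λ_q)` is generated
as a module over its graded centre by the finitely many monomials `γ_a^s δ_b^t` with
`s, t ≤ N`, where `N = dm` (resp. `N = 2dm` when `m` is odd, `char K ≠ 2` and `d` is odd). -/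
theorem ext_algebra_generated_by_bounded_monomials
    (K : Type) [Field K] (m : ℕ) [NeZero m] (hm : 1 ≤ m)
    (q : ZMod m → K) (hq : ∀ i, q i ≠ 0)
    (d : ℕ) (hd : 0 < d) (hζ : IsPrimitiveRoot (∏ i : ZMod m, q i) d) :
    let N : ℕ := if m % 2 = 1 ∧ ringChar K ≠ 2 ∧ d % 2 = 1 then 2 * d * m else d * m
    ∀ x : ExtAlg K m q, ∃ (n : ℕ) (cf g : Fin n → ExtAlg K m q),
      (∀ i, cf i ∈ ZGr K m q) ∧
      (∀ i, ∃ (a b : ZMod m) (s t : ℕ), s ≤ N ∧ t ≤ N ∧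
        g i = gam K m q a s * del K m q b t) ∧
      x = ∑ i, cf i * g i :=
  ext_algebra_generated_by_bounded_monomials_general K m q d hd hζ
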